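/- arXiv:2605.14179 — 2 statements merged into one kernel-verified Lean document; each statement's English description precedes it below -/
import Mathlib

section
/- Let n be a positive integer and let 𝒯 : ℝ^n → ℝ^n be twice continuously differentiable. Suppose that for every p ∈ ℝ^n the Jacobian matrix D𝒯(p) (the matrix with entries ∂𝒯_i/∂p_j evaluated at p) is an orthogonal matrix. Then the Jacobian is constant: there exists a fixed orthogonal matrix Q₀ such that D𝒯(p) = Q₀ for all p ∈ ℝ^n. -/
/-!
Write `F = D𝒯`. Differentiating `⟪F u, F v⟫ = ⟪u, v⟫` shows that
`c(u, v, w) = ⟪D²𝒯(w, u), F v⟫` is antisymmetric in `(u, v)`, while the symmetry of second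
derivatives makes it symmetric in `(u, w)`. A trilinear form with both properties vanishes, and
since `F` is invertible this forces `D²𝒯 = 0`, so `D𝒯` is constant.
-/

open Matrix

open scoped RealInnerProductSpace

theorem eq_zero_of_antisymm_of_symm {α : Type*} {c : α → α → α → ℝ}
    (hanti : ∀ a b d, c a b d = -c b a d) (hsymm : ∀ a b d, c a b d = c d b a) (a b d : α) :
    c a b d = 0 := by
  linarith [hanti a b d, hsymm b a d, hanti d a b, hsymm a d b, hanti b d a, hsymm d b a]

theorem inner_apply_add_inner_apply_eq_zero_of_hasFDerivAt {X E G : Type*}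
    [NormedAddCommGroup X] [NormedSpace ℝ X] [NormedAddCommGroup E] [NormedSpace ℝ E]
    [NormedAddCommGroup G] [InnerProductSpace ℝ G] {F : X → E →L[ℝ] G}
    {F' : X →L[ℝ] E →L[ℝ] G} {p : X} (hF' : HasFDerivAt F F' p) {u v : E}
    (hF : ∀ q, ⟪F q u, F q v⟫ = ⟪F p u, F p v⟫) (w : X) :
    ⟪F p u, F' w v⟫ + ⟪F' w u, F p v⟫ = 0 := by
  have happly (x : E) :
      HasFDerivAt (fun q => F q x) ((ContinuousLinearMap.apply ℝ G x).comp F') p :=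
    (ContinuousLinearMap.apply ℝ G x).hasFDerivAt.comp p hF'
  have hconst : HasFDerivAt (fun q => ⟪F q u, F q v⟫) (0 : X →L[ℝ] ℝ) p := by
    simp only [hF]
    exact hasFDerivAt_const _ _
  simpa using congr($(((happly u).inner ℝ (happly v)).unique hconst) w)

theorem eq_zero_of_hasFDerivAt_of_inner_apply_const_of_symm {E G : Type*}
    [NormedAddCommGroup E] [NormedSpace ℝ E] [NormedAddCommGroup G] [InnerProductSpace ℝ G]
    {F : E → E →L[ℝ] G} {F' : E →L[ℝ] E →L[ℝ] G} {p : E} (hF' : HasFDerivAt F F' p)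
    (hF : ∀ q u v, ⟪F q u, F q v⟫ = ⟪F p u, F p v⟫) (hsurj : Function.Surjective (F p))
    (hsymm : ∀ u v, F' u v = F' v u) : F' = 0 := by
  have horth (w u v : E) : ⟪F' w u, F p v⟫ = 0 := by
    refine eq_zero_of_antisymm_of_symm (c := fun u v w => ⟪F' w u, F p v⟫) (fun u v w => ?_)
      (fun u v w => by simp only [hsymm w u]) u v w
    have := inner_apply_add_inner_apply_eq_zero_of_hasFDerivAt hF' (hF · v u) w
    rw [real_inner_comm] at this
    linarith
  ext w u : 2
  obtain ⟨v, hv⟩ := hsurj (F' w u)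
  simpa [hv] using horth w u v

theorem fderiv_eq_of_contDiff_two_of_inner_fderiv_apply {E : Type*} [NormedAddCommGroup E]
    [InnerProductSpace ℝ E] [FiniteDimensional ℝ E] {T : E → E} (hT : ContDiff ℝ 2 T)
    (hisom : ∀ p u v, ⟪fderiv ℝ T p u, fderiv ℝ T p v⟫ = ⟪u, v⟫) (p q : E) :
    fderiv ℝ T p = fderiv ℝ T q := by
  have hdiff : Differentiable ℝ (fderiv ℝ T) :=
    (hT.fderiv_right one_add_one_eq_two.le).differentiable one_ne_zero
  have hsurj (p : E) : Function.Surjective (fderiv ℝ T p) :=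
    LinearMap.injective_iff_surjective.mp
      ((fderiv ℝ T p : E →ₗ[ℝ] E).isometryOfInner (hisom p)).injective
  have hsecond (p : E) : fderiv ℝ (fderiv ℝ T) p = 0 :=
    eq_zero_of_hasFDerivAt_of_inner_apply_const_of_symm (hdiff p).hasFDerivAt
      (fun q u v => by rw [hisom, hisom]) (hsurj p)
      (hT.contDiffAt.isSymmSndFDerivAt (by simp))
  exact is_const_of_fderiv_eq_zero hdiff hsecond p q

theorem Matrix.toEuclideanCLM_eq_of_apply_single {n : Type*} [Fintype n] [DecidableEq n]
    {A : Matrix n n ℝ} {L : EuclideanSpace ℝ n →L[ℝ] EuclideanSpace ℝ n}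
    (h : ∀ i j, A i j = L (EuclideanSpace.single j 1) i) : toEuclideanCLM (𝕜 := ℝ) A = L := by
  have hA : A = LinearMap.toMatrix (EuclideanSpace.basisFun n ℝ).toBasis
      (EuclideanSpace.basisFun n ℝ).toBasis L := by
    ext i j
    simp [LinearMap.toMatrix_apply, h]
  apply ContinuousLinearMap.coe_injective
  rw [coe_toEuclideanCLM_eq_toEuclideanLin, toEuclideanLin_eq_toLin_orthonormal, hA,
    Matrix.toLin_toMatrix]

theorem Matrix.inner_toEuclideanCLM_apply_toEuclideanCLM_apply {n : Type*} [Fintype n]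
    [DecidableEq n] {A : Matrix n n ℝ} (hA : Aᵀ * A = 1) (u v : EuclideanSpace ℝ n) :
    ⟪toEuclideanCLM (𝕜 := ℝ) A u, toEuclideanCLM (𝕜 := ℝ) A v⟫ = ⟪u, v⟫ := by
  rw [inner_toEuclideanCLM, ofLp_toEuclideanCLM, dotProduct_mulVec, ← vecMul_transpose,
    vecMul_vecMul, hA, vecMul_one]
  simp [EuclideanSpace.inner_eq_star_dotProduct, dotProduct_comm]

theorem jacobian_orthogonal_implies_constant_general (n : ℕ)
    (T : EuclideanSpace ℝ (Fin n) → EuclideanSpace ℝ (Fin n))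
    (hT : ContDiff ℝ 2 T)
    (J : EuclideanSpace ℝ (Fin n) → Matrix (Fin n) (Fin n) ℝ)
    (hJ : ∀ p i j, J p i j = fderiv ℝ T p (EuclideanSpace.single j 1) i)
    (horth : ∀ p, J p * (J p)ᵀ = 1) :
    ∃ Q₀ : Matrix (Fin n) (Fin n) ℝ, Q₀ * Q₀ᵀ = 1 ∧ ∀ p, J p = Q₀ := by
  have hisom (p : EuclideanSpace ℝ (Fin n)) (u v : EuclideanSpace ℝ (Fin n)) :
      ⟪fderiv ℝ T p u, fderiv ℝ T p v⟫ = ⟪u, v⟫ := by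
    rw [← toEuclideanCLM_eq_of_apply_single (hJ p)]
    exact inner_toEuclideanCLM_apply_toEuclideanCLM_apply (mul_eq_one_comm.mp (horth p)) u v
  refine ⟨J 0, horth 0, fun p => ?_⟩
  ext i j
  rw [hJ, hJ, fderiv_eq_of_contDiff_two_of_inner_fderiv_apply hT hisom p 0]

/-- If `𝒯 : ℝ^n → ℝ^n` is twice continuously differentiable and its Jacobian matrix is
orthogonal at every point, then the Jacobian is a constant orthogonal matrix. -/
theorem jacobian_orthogonal_implies_constant (n : ℕ) (hn : 0 < n)
    (T : EuclideanSpace ℝ (Fin n) → EuclideanSpace ℝ (Fin n))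
    (hT : ContDiff ℝ 2 T)
    (J : EuclideanSpace ℝ (Fin n) → Matrix (Fin n) (Fin n) ℝ)
    (hJ : ∀ p i j, J p i j = fderiv ℝ T p (EuclideanSpace.single j 1) i)
    (horth : ∀ p, J p * (J p)ᵀ = 1) :
    ∃ Q₀ : Matrix (Fin n) (Fin n) ℝ, Q₀ * Q₀ᵀ = 1 ∧ ∀ p, J p = Q₀ :=
  jacobian_orthogonal_implies_constant_general n T hT J hJ horth
end

section
/- Let W_V : ℝ^{3×3} → ℝ be differentiable and define W(F) := W_V(F · (det F)^{−1/3}) on the set of 3 × 3 real matrices F with det F > 0. For such F, let P(F) be the 3 × 3 matrix of partial derivatives P(F)_{ij} = ∂W/∂F_{ij}. Then tr(P(F) Fᵀ) = 0; that is, the Frobenius inner product of the derivative of W at F with F itself vanishes, so the associated stress P(F) Fᵀ is trace-free (purely deviatoric). -/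
open Matrix

private lemma diff_finset_prod {ι : Type*} {E : Type*} [NormedAddCommGroup E]
    [NormedSpace ℝ E] (s : Finset ι) (f : ι → E → ℝ)
    (hf : ∀ i, Differentiable ℝ (f i)) :
    Differentiable ℝ (fun x => ∏ i ∈ s, f i x) := by
  classical
  induction s using Finset.induction_on with
  | empty => simp
  | insert a s hi ih =>
      simp only [Finset.prod_insert hi]
      exact (hf _).mul ih

private lemma diff_det :
    Differentiable ℝ (fun m : Fin 3 → Fin 3 → ℝ => (Matrix.of m).det) := by
  simp only [Matrix.det_apply']
  refine Differentiable.fun_sum fun σ _ => ?_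
  refine Differentiable.const_mul ?_ _
  refine diff_finset_prod _ _ fun i => ?_
  exact (differentiable_apply (𝕜 := ℝ) (F' := fun _ : Fin 3 => ℝ) i).comp
    (differentiable_apply (𝕜 := ℝ) (F' := fun _ : Fin 3 => Fin 3 → ℝ) (σ i))

/-- If `W(F) := W_V(F (det F)^{-1/3})` depends only on the isochoric part of `F`, then for
`F` with positive determinant the stress `P(F)_{ij} = ∂W/∂F_{ij}` satisfies
`tr(P(F) Fᵀ) = 0`: the associated stress is purely deviatoric. -/
theorem isochoric_energy_stress_deviatoric
    (WV : Matrix (Fin 3) (Fin 3) ℝ → ℝ)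
    (hWV : Differentiable ℝ fun m : Fin 3 → Fin 3 → ℝ => WV (Matrix.of m))
    (F : Matrix (Fin 3) (Fin 3) ℝ) (hF : 0 < F.det)
    (P : Matrix (Fin 3) (Fin 3) ℝ)
    (hP : ∀ i j, P i j =
      deriv (fun t : ℝ =>
        WV (((F + t • Matrix.single i j (1:ℝ)).det ^ (-(1:ℝ)/3)) •
              (F + t • Matrix.single i j (1:ℝ)))) 0) :
    Matrix.trace (P * Fᵀ) = 0 := by
  classical
  -- the energy as a function on `Fin 3 → Fin 3 → ℝ`
  set g : (Fin 3 → Fin 3 → ℝ) → ℝ :=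
    fun m => WV (((Matrix.of m).det ^ (-(1:ℝ)/3)) • Matrix.of m) with hg
  set F' : Fin 3 → Fin 3 → ℝ := Matrix.of.symm F with hF'
  set E : Fin 3 → Fin 3 → (Fin 3 → Fin 3 → ℝ) :=
    fun i j => Matrix.of.symm (Matrix.single i j (1:ℝ)) with hE
  have hdet : Differentiable ℝ (fun m : Fin 3 → Fin 3 → ℝ => (Matrix.of m).det) :=
    diff_det
  have hgdiff : DifferentiableAt ℝ g F' := by
    have h1 : DifferentiableAt ℝ
        (fun m : Fin 3 → Fin 3 → ℝ => (Matrix.of m).det ^ (-(1:ℝ)/3)) F' := by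
      refine DifferentiableAt.rpow_const (hdet.differentiableAt) ?_
      exact Or.inl (ne_of_gt hF)
    have h2 : DifferentiableAt ℝ
        (fun m : Fin 3 → Fin 3 → ℝ => ((Matrix.of m).det ^ (-(1:ℝ)/3)) • m)
        F' := h1.smul differentiableAt_id
    exact (hWV.differentiableAt).comp F' h2
  -- directional derivatives equal the fderiv applied to the direction
  have hdir : ∀ v : Fin 3 → Fin 3 → ℝ,
      deriv (fun t : ℝ => g (F' + t • v)) 0 = fderiv ℝ g F' v := by
    intro v
    have hline : HasDerivAt (fun t : ℝ => F' + t • v) v 0 := by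
      have : HasDerivAt (fun t : ℝ => t • v) ((1:ℝ) • v) 0 :=
        (hasDerivAt_id (0:ℝ)).smul_const v
      simpa using this.const_add F'
    have hFd : HasFDerivAt g (fderiv ℝ g F') (F' + (0:ℝ) • v) := by
      simpa using hgdiff.hasFDerivAt
    have hcomp : HasDerivAt (fun t : ℝ => g (F' + t • v)) (fderiv ℝ g F' v) 0 := by
      have := hFd.comp_hasDerivAt 0 hline
      exact this
    exact hcomp.deriv
  -- the key: g is constant along the ray through F
  have hray : deriv (fun t : ℝ => g (F' + t • F')) 0 = 0 := by
    have hconst : (fun t : ℝ => g (F' + t • F')) =ᶠ[nhds (0:ℝ)] fun _ => g F' := by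
      have hmem : Set.Ioo (-1 : ℝ) 1 ∈ nhds (0:ℝ) :=
        Ioo_mem_nhds (by norm_num) (by norm_num)
      filter_upwards [hmem] with t ht
      have ht1 : (0:ℝ) < 1 + t := by linarith [ht.1]
      have hFt : F' + t • F' = (1 + t) • F' := by
        rw [add_smul, one_smul]
      rw [hFt, hg]
      have hof1 : Matrix.of ((1 + t) • F') = (1 + t) • F := rfl
      have hof2 : Matrix.of F' = F := rfl
      simp only [hof1, hof2]
      have hdet' : ((1 + t) • F).det = (1 + t) ^ 3 * F.det := by
        rw [Matrix.det_smul]; norm_num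
      rw [hdet']
      have hr : ((1 + t) ^ 3 * F.det) ^ (-(1:ℝ)/3)
          = (1 + t)⁻¹ * F.det ^ (-(1:ℝ)/3) := by
        rw [Real.mul_rpow (by positivity) hF.le]
        congr 1
        rw [← Real.rpow_natCast (1 + t) 3, ← Real.rpow_mul ht1.le]
        norm_num
        rw [Real.rpow_neg_one]
      rw [hr, smul_smul, mul_assoc, mul_comm (F.det ^ (-(1:ℝ)/3)) (1 + t),
        ← mul_assoc, inv_mul_cancel₀ (ne_of_gt ht1), one_mul]
    calc deriv (fun t : ℝ => g (F' + t • F')) 0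
        = deriv (fun _ : ℝ => g F') 0 := hconst.deriv_eq
      _ = 0 := deriv_const _ _
  -- P i j is the fderiv along the standard basis matrix
  have hPij : ∀ i j, P i j = fderiv ℝ g F' (E i j) := by
    intro i j
    exact (hP i j).trans (hdir (E i j))
  -- decompose F
  have hFdecomp : F' = ∑ i, ∑ j, F i j • E i j := by
    funext a b
    simp only [hF', hE, Equiv.symm_apply_apply, Finset.sum_apply, Pi.smul_apply,
      smul_eq_mul]
    show F a b = ∑ i, ∑ j, F i j * Matrix.single i j (1:ℝ) a b
    simp [Matrix.single, Fin.sum_univ_three]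
    fin_cases a <;> fin_cases b <;> simp
  -- expand the trace
  have htrace : Matrix.trace (P * Fᵀ) = ∑ i, ∑ j, P i j * F i j := by
    simp [Matrix.trace, Matrix.mul_apply, Matrix.diag]
  rw [htrace]
  have hsum : ∑ i, ∑ j, P i j * F i j = fderiv ℝ g F' F' := by
    calc ∑ i, ∑ j, P i j * F i j
        = ∑ i, ∑ j, F i j • fderiv ℝ g F' (E i j) := by
          refine Finset.sum_congr rfl fun i _ => Finset.sum_congr rfl fun j _ => ?_
          rw [hPij i j, smul_eq_mul, mul_comm]
      _ = fderiv ℝ g F' (∑ i, ∑ j, F i j • E i j) := by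
          simp only [map_sum, ContinuousLinearMap.map_smul]
      _ = fderiv ℝ g F' F' := by rw [← hFdecomp]
  rw [hsum, ← hdir F', hray]
end
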